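/- arXiv:1401.4656 — 3 statements merged into one kernel-verified Lean document; each statement's English description precedes it below -/
import Mathlib

section
/- Let g be a 3-Lie algebra and (V,ρ) a representation of g. The coboundary operator d on the generalized Chevalley–Eilenberg complex Cⁿ(g,V) = Hom(Λ^{2n+1}g, V), given by formula (7) of the paper, satisfies d∘d = 0. -/
open Finset

/-- Remove the entries at positions `p < q` from a sequence. -/
def removePair {g : Type*} (p q : ℕ) (x : ℕ → g) : ℕ → g :=
  fun i => if i < p then x i else if i + 1 < q then x (i + 1) else x (i + 2)

/-- The coboundary operator `d_{n-1} : C^{n-1}(g,V) → C^n(g,V)` of formula (7), written with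
0-indexed variables: a cochain in `C^{m}(g,V)` is viewed as a function of sequences `ℕ → g`
depending only on the first `2m+1` entries. -/
def coboundary {K : Type*} [Field K] {g V : Type*} [AddCommGroup g] [Module K g]
    [AddCommGroup V] [Module K V]
    (ρ : g →ₗ[K] g →ₗ[K] Module.End K V) (b : g →ₗ[K] g →ₗ[K] g →ₗ[K] g)
    (n : ℕ) (ω : (ℕ → g) → V) : (ℕ → g) → V :=
  fun x =>
    ((-1 : ℤ) ^ (n + 1)) • ρ (x (2 * n)) (x (2 * n - 2)) (ω (removePair (2 * n - 2) (2 * n) x))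
    + ((-1 : ℤ) ^ (n + 1)) • ρ (x (2 * n - 1)) (x (2 * n)) (ω (removePair (2 * n - 1) (2 * n) x))
    + ∑ k ∈ range n,
        ((-1 : ℤ) ^ k) • ρ (x (2 * k)) (x (2 * k + 1)) (ω (removePair (2 * k) (2 * k + 1) x))
    + ∑ k ∈ range n, ∑ j ∈ Icc (2 * k + 2) (2 * n),
        ((-1 : ℤ) ^ (k + 1)) •
          ω (removePair (2 * k) (2 * k + 1)
              (Function.update x j (b (x (2 * k)) (x (2 * k + 1)) (x j))))

/-!
For `u v : g` let `ι_{u,v}` insert `u, v` as the first two arguments of a cochain, and let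
`L_{u,v} ω (x) = ρ(u,v) (ω x) - ∑_j ω(x₀, …, [u,v,x_j], …)`. Reindexing formula (7) gives the
Cartan formula `ι_{u,v} ∘ d = L_{u,v} - d ∘ ι_{u,v}`; the fundamental identity and (R1) give
`[L_{u,v}, L_{a,c}] = L_{[u,v,a],c} + L_{a,[u,v,c]}`, and from these two facts
`L_{u,v} ∘ d = d ∘ L_{u,v}` follows by induction on the degree. A cochain vanishes as soon as
all its contractions `ι_{a,c}` do, and
`ι_{a,c} (d d ω) = L_{a,c} (d ω) - d (L_{a,c} ω - d ι_{a,c} ω) = d d (ι_{a,c} ω)`,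
which vanishes by induction. In the lowest degree, skew-symmetry of `ρ` shows that
`ι_{a,c} (d ω) - L_{a,c} ω` is a sum of cochains `y ↦ ρ(v, y₀) w`, and these are closed by (R2).
-/

open Function

section Sequences

variable {g : Type*}

def prependPair (u v : g) (x : ℕ → g) : ℕ → g
  | 0 => u
  | 1 => v
  | i + 2 => x i

@[simp] lemma prependPair_zero (u v : g) (x : ℕ → g) : prependPair u v x 0 = u := rfl

@[simp] lemma prependPair_one (u v : g) (x : ℕ → g) : prependPair u v x 1 = v := rfl

@[simp] lemma prependPair_add_two (u v : g) (x : ℕ → g) (i : ℕ) :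
    prependPair u v x (i + 2) = x i := rfl

lemma prependPair_eta (x : ℕ → g) : prependPair (x 0) (x 1) (fun i => x (i + 2)) = x := by
  funext i
  rcases i with _ | _ | i <;> rfl

lemma removePair_prependPair (p q : ℕ) (u v : g) (x : ℕ → g) :
    removePair (p + 2) (q + 2) (prependPair u v x) = prependPair u v (removePair p q x) := by
  funext i
  rcases i with _ | _ | i
  · rfl
  · rfl
  · simp only [removePair, prependPair_add_two]
    split_ifs <;> first | rfl | omega

@[simp] lemma removePair_zero_one_prependPair (u v : g) (x : ℕ → g) :
    removePair 0 1 (prependPair u v x) = x := by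
  funext i
  simp [removePair]

lemma update_prependPair_add_two (u v : g) (x : ℕ → g) (j : ℕ) (w : g) :
    update (prependPair u v x) (j + 2) w = prependPair u v (update x j w) := by
  funext i
  rcases i with _ | _ | i
  · rfl
  · rfl
  · simp [update_apply]

lemma update_prependPair_zero (u v : g) (x : ℕ → g) (w : g) :
    update (prependPair u v x) 0 w = prependPair w v x := by
  funext i
  rcases i with _ | _ | i <;> simp

lemma update_prependPair_one (u v : g) (x : ℕ → g) (w : g) :
    update (prependPair u v x) 1 w = prependPair u w x := by
  funext i
  rcases i with _ | _ | i <;> simp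

end Sequences

lemma sum_Icc_add_right {α M : Type*} [AddCommMonoid α] [PartialOrder α]
    [IsOrderedCancelAddMonoid α] [ExistsAddOfLE α] [LocallyFiniteOrder α] [AddCommMonoid M]
    (f : α → M) (a b c : α) :
    ∑ j ∈ Icc (a + c) (b + c), f j = ∑ j ∈ Icc a b, f (j + c) := by
  rw [← map_add_right_Icc, sum_map]
  rfl

lemma sum_sum_update_update_sub_comm {g M : Type*} [AddCommGroup M] (N : ℕ)
    (ω : (ℕ → g) → M) (φ ψ : g → g) (x : ℕ → g) :
    ∑ j ∈ range N, ∑ l ∈ range N,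
        ω (update (update x j (φ (x j))) l (ψ (update x j (φ (x j)) l)))
      - ∑ j ∈ range N, ∑ l ∈ range N,
        ω (update (update x j (ψ (x j))) l (φ (update x j (ψ (x j)) l)))
      = ∑ j ∈ range N, (ω (update x j (ψ (φ (x j)))) - ω (update x j (φ (ψ (x j))))) := by
  rw [sum_comm (s := range N) (f := fun j l => ω (update (update x j (ψ (x j))) l _)),
    ← sum_sub_distrib]
  refine sum_congr rfl fun j hj => ?_
  rw [← sum_sub_distrib, sum_eq_single_of_mem j hj]
  · simp only [update_self, update_idem]
  · intro l _ hlj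
    rw [update_of_ne hlj, update_of_ne hlj.symm, update_comm hlj, sub_self]

section Cochains

variable {g V : Type*}

def contractPair (u v : g) (ω : (ℕ → g) → V) : (ℕ → g) → V :=
  fun x => ω (prependPair u v x)

lemma funext_contractPair {f f' : (ℕ → g) → V}
    (h : ∀ u v, contractPair u v f = contractPair u v f') : f = f' := by
  funext x
  rw [← prependPair_eta x]
  exact congrFun (h _ _) _

def DependsOnFirst (N : ℕ) (ω : (ℕ → g) → V) : Prop :=
  ∀ x y : ℕ → g, (∀ i < N, x i = y i) → ω x = ω y

def AdditiveInFirst [Add g] [Add V] (N : ℕ) (ω : (ℕ → g) → V) : Prop :=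
  ∀ (x : ℕ → g) (i : ℕ), i < N → ∀ u v : g,
    ω (update x i (u + v)) = ω (update x i u) + ω (update x i v)

lemma DependsOnFirst.contractPair {N : ℕ} {ω : (ℕ → g) → V} (h : DependsOnFirst (N + 2) ω)
    (u v : g) : DependsOnFirst N (contractPair u v ω) := by
  intro x y hxy
  refine h _ _ fun i hi => ?_
  rcases i with _ | _ | i
  · rfl
  · rfl
  · exact hxy i (by omega)

lemma AdditiveInFirst.contractPair [Add g] [Add V] {N : ℕ} {ω : (ℕ → g) → V}
    (h : AdditiveInFirst (N + 2) ω) (u v : g) : AdditiveInFirst N (contractPair u v ω) := by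
  intro x i hi p q
  simp only [_root_.contractPair, ← update_prependPair_add_two]
  exact h _ _ (by omega) p q

lemma DependsOnFirst.eq_const {ω : (ℕ → g) → V} (h : DependsOnFirst 1 ω) (x : ℕ → g) :
    ω x = ω (fun _ => x 0) :=
  h _ _ fun i hi => by rw [Nat.lt_one_iff.mp hi]

lemma AdditiveInFirst.map_const_add [Zero g] [Add g] [Add V] {ω : (ℕ → g) → V}
    (ha : AdditiveInFirst 1 ω) (hd : DependsOnFirst 1 ω) (p q : g) :
    ω (fun _ => p + q) = ω (fun _ => p) + ω (fun _ => q) := by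
  simpa [hd.eq_const (update _ _ _)] using ha (fun _ => 0) 0 one_pos p q

end Cochains

section Coboundary

variable {K : Type*} [Field K] {g V : Type*} [AddCommGroup g] [Module K g]
  [AddCommGroup V] [Module K V]
  (ρ : g →ₗ[K] g →ₗ[K] Module.End K V) (b : g →ₗ[K] g →ₗ[K] g →ₗ[K] g)

def lieDeriv (N : ℕ) (u v : g) (ω : (ℕ → g) → V) : (ℕ → g) → V :=
  fun x => ρ u v (ω x) - ∑ j ∈ range N, ω (update x j (b u v (x j)))

lemma DependsOnFirst.lieDeriv {N : ℕ} {ω : (ℕ → g) → V} (hω : DependsOnFirst N ω) (u v : g) :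
    DependsOnFirst N (lieDeriv ρ b N u v ω) := by
  intro x y h
  simp only [_root_.lieDeriv]
  rw [hω x y h]
  congr 1
  refine sum_congr rfl fun j _ => hω _ _ fun i hi => ?_
  rcases eq_or_ne i j with rfl | hij
  · simp [h i hi]
  · simp [update_of_ne hij, h i hi]

lemma lieDeriv_sub (N : ℕ) (u v : g) (ω₁ ω₂ : (ℕ → g) → V) :
    lieDeriv ρ b N u v (ω₁ - ω₂) = lieDeriv ρ b N u v ω₁ - lieDeriv ρ b N u v ω₂ := by
  funext x
  simp only [lieDeriv, Pi.sub_apply, map_sub, sum_sub_distrib]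
  abel

lemma contractPair_lieDeriv (N : ℕ) (u v a c : g) (ω : (ℕ → g) → V) :
    contractPair a c (lieDeriv ρ b (N + 2) u v ω)
      = lieDeriv ρ b N u v (contractPair a c ω) - contractPair (b u v a) c ω
        - contractPair a (b u v c) ω := by
  funext z
  simp only [contractPair, lieDeriv, Pi.sub_apply]
  rw [sum_range_succ', sum_range_succ']
  simp only [update_prependPair_add_two, prependPair_add_two, zero_add, prependPair_zero,
    prependPair_one, update_prependPair_zero, update_prependPair_one]
  abel

lemma coboundary_add (n : ℕ) (ω₁ ω₂ : (ℕ → g) → V) :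
    coboundary ρ b n (ω₁ + ω₂) = coboundary ρ b n ω₁ + coboundary ρ b n ω₂ := by
  funext x
  simp only [coboundary, Pi.add_apply, map_add, smul_add, sum_add_distrib]
  abel

lemma coboundary_sub (n : ℕ) (ω₁ ω₂ : (ℕ → g) → V) :
    coboundary ρ b n (ω₁ - ω₂) = coboundary ρ b n ω₁ - coboundary ρ b n ω₂ := by
  funext x
  simp only [coboundary, Pi.sub_apply, map_sub, smul_sub, sum_sub_distrib]
  abel

lemma coboundary_succ_apply (n : ℕ) (ω : (ℕ → g) → V) (x : ℕ → g) :
    coboundary ρ b (n + 1) ω x =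
      ((-1 : ℤ) ^ n) • ρ (x (2 * n + 2)) (x (2 * n)) (ω (removePair (2 * n) (2 * n + 2) x))
      + ((-1 : ℤ) ^ n) • ρ (x (2 * n + 1)) (x (2 * n + 2))
          (ω (removePair (2 * n + 1) (2 * n + 2) x))
      + ∑ k ∈ range (n + 1),
          ((-1 : ℤ) ^ k) • ρ (x (2 * k)) (x (2 * k + 1)) (ω (removePair (2 * k) (2 * k + 1) x))
      + ∑ k ∈ range (n + 1), ∑ j ∈ Icc (2 * k + 2) (2 * n + 2),
          ((-1 : ℤ) ^ (k + 1)) •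
            ω (removePair (2 * k) (2 * k + 1)
              (update x j (b (x (2 * k)) (x (2 * k + 1)) (x j)))) := by
  simp only [coboundary, pow_succ, mul_neg, mul_one, neg_neg, mul_add,
    show 2 * n + 2 - 2 = 2 * n by omega, show 2 * n + 2 - 1 = 2 * n + 1 by omega]

lemma contractPair_coboundary (m : ℕ) (ω : (ℕ → g) → V) (u v : g) :
    contractPair u v (coboundary ρ b (m + 2) ω)
      = lieDeriv ρ b (2 * m + 3) u v ω - coboundary ρ b (m + 1) (contractPair u v ω) := by
  funext x
  simp only [contractPair, Pi.sub_apply, lieDeriv]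
  -- the `k = 0` terms of the outer coboundary are exactly the terms of `L_{u,v}`
  rw [coboundary_succ_apply ρ b (m + 1), sum_range_succ' _ (m + 1), sum_range_succ' _ (m + 1)]
  simp only [sum_Icc_add_right _ _ _ 2, mul_zero, ← Nat.range_succ_eq_Icc_zero]
  rw [coboundary_succ_apply]
  simp only [contractPair, mul_add, mul_one, zero_add, Nat.add_right_comm _ 2 1,
    prependPair_add_two, prependPair_zero, prependPair_one, removePair_prependPair,
    removePair_zero_one_prependPair, update_prependPair_add_two, pow_succ, pow_zero, mul_neg_one,
    neg_smul, one_smul, sum_neg_distrib]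
  abel

lemma coboundary_one_apply {η : (ℕ → g) → V} (hη : DependsOnFirst 1 η) (x : ℕ → g) :
    coboundary ρ b 1 η x
      = ρ (x 2) (x 0) (η fun _ => x 1) + ρ (x 1) (x 2) (η fun _ => x 0)
        + ρ (x 0) (x 1) (η fun _ => x 2) - η (fun _ => b (x 0) (x 1) (x 2)) := by
  simp [coboundary, hη.eq_const (removePair _ _ _), removePair, sub_eq_add_neg]

lemma lieDeriv_one_const {η : (ℕ → g) → V} (hη : DependsOnFirst 1 η) (u v p : g) :
    lieDeriv ρ b 1 u v η (fun _ => p) = ρ u v (η fun _ => p) - η (fun _ => b u v p) := by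
  simp [lieDeriv, hη.eq_const (update _ _ _)]

variable
    (hfi : ∀ x₁ x₂ y₁ y₂ y₃, b x₁ x₂ (b y₁ y₂ y₃)
      = b (b x₁ x₂ y₁) y₂ y₃ + b y₁ (b x₁ x₂ y₂) y₃ + b y₁ y₂ (b x₁ x₂ y₃))
    (hρskew : ∀ x y, ρ x y = - ρ y x)
    (hR1 : ∀ x₁ x₂ y₁ y₂ : g,
      ρ x₁ x₂ * ρ y₁ y₂ - ρ y₁ y₂ * ρ x₁ x₂ = ρ (b x₁ x₂ y₁) y₂ + ρ y₁ (b x₁ x₂ y₂))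
    (hR2 : ∀ x₁ y₁ y₂ y₃ : g,
      ρ x₁ (b y₁ y₂ y₃) = ρ y₂ y₃ * ρ x₁ y₁ + ρ y₃ y₁ * ρ x₁ y₂ + ρ y₁ y₂ * ρ x₁ y₃)

include hρskew in
lemma contractPair_coboundary_one {η : (ℕ → g) → V} (hη : DependsOnFirst 1 η) (u v : g) :
    contractPair u v (coboundary ρ b 1 η)
      = lieDeriv ρ b 1 u v η + (fun y => ρ v (y 0) (η fun _ => u))
        - (fun y => ρ u (y 0) (η fun _ => v)) := by
  funext y
  simp only [contractPair, coboundary_one_apply ρ b hη, Pi.add_apply, Pi.sub_apply, lieDeriv,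
    sum_range_one, prependPair_zero, prependPair_one, show prependPair u v y 2 = y 0 from rfl,
    hη.eq_const y, hη.eq_const (update _ _ _), update_self, hρskew (y 0) u, LinearMap.neg_apply]
  abel

include hR2 in
lemma coboundary_one_rho_eq_zero (a : g) (w : V) :
    coboundary ρ b 1 (fun y => ρ a (y 0) w) = 0 := by
  funext x
  have h := LinearMap.congr_fun (hR2 a (x 0) (x 1) (x 2)) w
  simp only [LinearMap.add_apply, Module.End.mul_apply] at h
  rw [coboundary_one_apply ρ b fun y y' h => by rw [h 0 one_pos], h, Pi.zero_apply]
  abel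

include hR1 in
lemma rho_rho_apply (u v p q : g) (w : V) :
    ρ u v (ρ p q w) = ρ p q (ρ u v w) + ρ (b u v p) q w + ρ p (b u v q) w := by
  have h := LinearMap.congr_fun (hR1 u v p q) w
  simp only [LinearMap.sub_apply, LinearMap.add_apply, Module.End.mul_apply] at h
  rw [add_assoc, ← h]
  abel

include hfi hR1 in
lemma lieDeriv_lieDeriv {N : ℕ} {ω : (ℕ → g) → V} (hω : AdditiveInFirst N ω) (u v a c : g) :
    lieDeriv ρ b N u v (lieDeriv ρ b N a c ω)
      = lieDeriv ρ b N a c (lieDeriv ρ b N u v ω) + lieDeriv ρ b N (b u v a) c ω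
        + lieDeriv ρ b N a (b u v c) ω := by
  funext x
  have hdiag : ∀ j ∈ range N,
      ω (update x j (b a c (b u v (x j)))) - ω (update x j (b u v (b a c (x j))))
        = -(ω (update x j (b (b u v a) c (x j))) + ω (update x j (b a (b u v c) (x j)))) := by
    intro j hj
    rw [hfi u v a c, hω x j (mem_range.mp hj), hω x j (mem_range.mp hj)]
    abel
  have hswap := sum_sum_update_update_sub_comm N ω (b u v) (b a c) x
  rw [sum_congr rfl hdiag, sum_neg_distrib, sum_add_distrib] at hswap
  simp only [lieDeriv, Pi.add_apply, map_sub, map_sum, sum_sub_distrib]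
  rw [rho_rho_apply ρ b hR1, sub_eq_iff_eq_add'.mp hswap]
  abel

include hfi hR1 in
lemma lieDeriv_coboundary_one {ω : (ℕ → g) → V} (hd : DependsOnFirst 1 ω)
    (ha : AdditiveInFirst 1 ω) (u v : g) :
    lieDeriv ρ b 3 u v (coboundary ρ b 1 ω) = coboundary ρ b 1 (lieDeriv ρ b 1 u v ω) := by
  funext x
  rw [coboundary_one_apply ρ b (hd.lieDeriv ρ b u v)]
  simp only [lieDeriv_one_const ρ b hd]
  simp only [lieDeriv, coboundary_one_apply ρ b hd, map_sub, map_add, update_apply,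
    sum_sub_distrib, sum_range_succ, range_one, sum_singleton, OfNat.ofNat_ne_zero, ↓reduceIte,
    one_ne_zero, OfNat.ofNat_ne_one, zero_ne_one, OfNat.zero_ne_ofNat, OfNat.one_ne_ofNat]
  rw [rho_rho_apply ρ b hR1 u v (x 2), rho_rho_apply ρ b hR1 u v (x 1),
    rho_rho_apply ρ b hR1 u v (x 0), hfi u v, ha.map_const_add hd, ha.map_const_add hd]
  abel

include hfi hR1 in
lemma lieDeriv_coboundary (m : ℕ) {ω : (ℕ → g) → V} (hd : DependsOnFirst (2 * m + 1) ω)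
    (ha : AdditiveInFirst (2 * m + 1) ω) (u v : g) :
    lieDeriv ρ b (2 * m + 3) u v (coboundary ρ b (m + 1) ω)
      = coboundary ρ b (m + 1) (lieDeriv ρ b (2 * m + 1) u v ω) := by
  induction m generalizing ω with
  | zero => exact lieDeriv_coboundary_one ρ b hfi hR1 hd ha u v
  | succ m ih =>
    refine funext_contractPair fun a c => ?_
    show contractPair a c (lieDeriv ρ b (2 * m + 3 + 2) u v (coboundary ρ b (m + 2) ω))
      = contractPair a c (coboundary ρ b (m + 2) (lieDeriv ρ b (2 * m + 3) u v ω))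
    rw [contractPair_lieDeriv, contractPair_coboundary, contractPair_coboundary,
      contractPair_coboundary, contractPair_coboundary, contractPair_lieDeriv ρ b (2 * m + 1),
      lieDeriv_sub, lieDeriv_lieDeriv ρ b hfi hR1 (N := 2 * m + 3) ha,
      ih (hd.contractPair a c) (ha.contractPair a c), coboundary_sub, coboundary_sub]
    abel

include hfi hρskew hR1 hR2 in
lemma coboundary_two_coboundary_one {ω : (ℕ → g) → V} (hd : DependsOnFirst 1 ω)
    (ha : AdditiveInFirst 1 ω) : coboundary ρ b 2 (coboundary ρ b 1 ω) = 0 := by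
  refine funext_contractPair fun a c => ?_
  rw [contractPair_coboundary ρ b 0, lieDeriv_coboundary_one ρ b hfi hR1 hd ha,
    contractPair_coboundary_one ρ b hρskew hd, coboundary_sub, coboundary_add,
    coboundary_one_rho_eq_zero ρ b hR2, coboundary_one_rho_eq_zero ρ b hR2]
  simp only [zero_add, add_zero, sub_zero, sub_self]
  rfl

include hfi hρskew hR1 hR2 in
lemma coboundary_coboundary (m : ℕ) {ω : (ℕ → g) → V} (hd : DependsOnFirst (2 * m + 1) ω)
    (ha : AdditiveInFirst (2 * m + 1) ω) :
    coboundary ρ b (m + 2) (coboundary ρ b (m + 1) ω) = 0 := by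
  induction m generalizing ω with
  | zero => exact coboundary_two_coboundary_one ρ b hfi hρskew hR1 hR2 hd ha
  | succ m ih =>
    refine funext_contractPair fun a c => ?_
    rw [contractPair_coboundary, lieDeriv_coboundary ρ b hfi hR1 (m + 1) hd ha,
      contractPair_coboundary, coboundary_sub, ih (hd.contractPair a c) (ha.contractPair a c),
      sub_zero]
    exact sub_self _

end Coboundary
theorem threeLie_coboundary_squared_zero_general
    {K : Type*} [Field K] {g V : Type*} [AddCommGroup g] [Module K g]
    [AddCommGroup V] [Module K V]
    (b : g →ₗ[K] g →ₗ[K] g →ₗ[K] g)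
    (hfi : ∀ x₁ x₂ y₁ y₂ y₃, b x₁ x₂ (b y₁ y₂ y₃)
      = b (b x₁ x₂ y₁) y₂ y₃ + b y₁ (b x₁ x₂ y₂) y₃ + b y₁ y₂ (b x₁ x₂ y₃))
    (ρ : g →ₗ[K] g →ₗ[K] Module.End K V)
    (hρskew : ∀ x y, ρ x y = - ρ y x)
    (hR1 : ∀ x₁ x₂ y₁ y₂ : g,
      ρ x₁ x₂ * ρ y₁ y₂ - ρ y₁ y₂ * ρ x₁ x₂ = ρ (b x₁ x₂ y₁) y₂ + ρ y₁ (b x₁ x₂ y₂))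
    (hR2 : ∀ x₁ y₁ y₂ y₃ : g,
      ρ x₁ (b y₁ y₂ y₃) = ρ y₂ y₃ * ρ x₁ y₁ + ρ y₃ y₁ * ρ x₁ y₂ + ρ y₁ y₂ * ρ x₁ y₃)
    (n : ℕ) (hn : 1 ≤ n)
    (ω : (ℕ → g) → V)
    -- ω depends only on its first 2n−1 entries:
    (hdep : ∀ x y : ℕ → g, (∀ i < 2 * n - 1, x i = y i) → ω x = ω y)
    -- ω is additive and homogeneous in each of its first 2n−1 entries:
    (hadd : ∀ (x : ℕ → g) (i : ℕ), i < 2 * n - 1 → ∀ u v : g,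
      ω (Function.update x i (u + v)) = ω (Function.update x i u) + ω (Function.update x i v)) :
    ∀ x : ℕ → g, coboundary ρ b (n + 1) (coboundary ρ b n ω) x = 0 := by
  obtain ⟨m, rfl⟩ := Nat.exists_eq_add_of_le' hn
  rw [show 2 * (m + 1) - 1 = 2 * m + 1 by omega] at hdep hadd
  exact congrFun (coboundary_coboundary ρ b hfi hρskew hR1 hR2 m hdep hadd)

/-- Theorem 2.3: for a 3-Lie algebra `g` and a representation `(V,ρ)`, the
coboundary operator of the generalized Chevalley–Eilenberg complex satisfies `d ∘ d = 0`:
for every alternating multilinear `(2n-1)`-cochain `ω` (with `n ≥ 1`),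
`d_n (d_{n-1} ω) = 0`. -/
theorem threeLie_coboundary_squared_zero
    {K : Type*} [Field K] {g V : Type*} [AddCommGroup g] [Module K g]
    [AddCommGroup V] [Module K V]
    (b : g →ₗ[K] g →ₗ[K] g →ₗ[K] g)
    (hb1 : ∀ x y z, b x y z = - b y x z)
    (hb2 : ∀ x y z, b x y z = - b x z y)
    (hfi : ∀ x₁ x₂ y₁ y₂ y₃, b x₁ x₂ (b y₁ y₂ y₃)
      = b (b x₁ x₂ y₁) y₂ y₃ + b y₁ (b x₁ x₂ y₂) y₃ + b y₁ y₂ (b x₁ x₂ y₃))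
    (ρ : g →ₗ[K] g →ₗ[K] Module.End K V)
    (hρskew : ∀ x y, ρ x y = - ρ y x)
    (hR1 : ∀ x₁ x₂ y₁ y₂ : g,
      ρ x₁ x₂ * ρ y₁ y₂ - ρ y₁ y₂ * ρ x₁ x₂ = ρ (b x₁ x₂ y₁) y₂ + ρ y₁ (b x₁ x₂ y₂))
    (hR2 : ∀ x₁ y₁ y₂ y₃ : g,
      ρ x₁ (b y₁ y₂ y₃) = ρ y₂ y₃ * ρ x₁ y₁ + ρ y₃ y₁ * ρ x₁ y₂ + ρ y₁ y₂ * ρ x₁ y₃)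
    (n : ℕ) (hn : 1 ≤ n)
    (ω : (ℕ → g) → V)
    -- ω depends only on its first 2n−1 entries:
    (hdep : ∀ x y : ℕ → g, (∀ i < 2 * n - 1, x i = y i) → ω x = ω y)
    -- ω is additive and homogeneous in each of its first 2n−1 entries:
    (hadd : ∀ (x : ℕ → g) (i : ℕ), i < 2 * n - 1 → ∀ u v : g,
      ω (Function.update x i (u + v)) = ω (Function.update x i u) + ω (Function.update x i v))
    (hsmul : ∀ (x : ℕ → g) (i : ℕ), i < 2 * n - 1 → ∀ (c : K) (u : g),
      ω (Function.update x i (c • u)) = c • ω (Function.update x i u))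
    -- ω is alternating in its first 2n−1 entries:
    (halt : ∀ (x : ℕ → g) (i j : ℕ), i < j → j < 2 * n - 1 → x i = x j → ω x = 0) :
    ∀ x : ℕ → g, coboundary ρ b (n + 1) (coboundary ρ b n ω) x = 0 :=
  threeLie_coboundary_squared_zero_general b hfi ρ hρskew hR1 hR2 n hn ω hdep hadd
end

section
/- Let g be a 3-Lie algebra and ω: Λ³g → g a skew-symmetric trilinear map. For a parameter λ, define [x₁,x₂,x₃]_λ = [x₁,x₂,x₃] + λω(x₁,x₂,x₃). Then [·,·,·]_λ satisfies the fundamental identity for all λ if and only if (i) ω itself satisfies the fundamental identity (defines a 3-Lie algebra structure), and (ii) ω is a 1-cocycle of g with coefficients in the adjoint representation. -/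
/-- Theorem 3.1: the deformed bracket `[·,·,·]_λ = [·,·,·] + λω` satisfies the
fundamental identity for all `λ` iff `ω` itself satisfies the fundamental identity and `ω` is a
1-cocycle of `g` with coefficients in the adjoint representation. -/
theorem threeLie_infinitesimal_deformation_iff
    {K : Type*} [Field K] {g : Type*} [AddCommGroup g] [Module K g]
    (hchar2 : (2 : K) ≠ 0) (hchar3 : (3 : K) ≠ 0)
    (b : g →ₗ[K] g →ₗ[K] g →ₗ[K] g)
    (hb1 : ∀ x y z, b x y z = - b y x z)
    (hb2 : ∀ x y z, b x y z = - b x z y)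
    (hfi : ∀ x₁ x₂ y₁ y₂ y₃, b x₁ x₂ (b y₁ y₂ y₃)
      = b (b x₁ x₂ y₁) y₂ y₃ + b y₁ (b x₁ x₂ y₂) y₃ + b y₁ y₂ (b x₁ x₂ y₃))
    (ω : g →ₗ[K] g →ₗ[K] g →ₗ[K] g)
    (hω1 : ∀ x y z, ω x y z = - ω y x z)
    (hω2 : ∀ x y z, ω x y z = - ω x z y) :
    -- the deformed bracket satisfies the fundamental identity for all λ ...
    (∀ (lam : K) (x₁ x₂ y₁ y₂ y₃ : g),
      (fun u v w => b u v w + lam • ω u v w) x₁ x₂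
          ((fun u v w => b u v w + lam • ω u v w) y₁ y₂ y₃)
        = (fun u v w => b u v w + lam • ω u v w)
            ((fun u v w => b u v w + lam • ω u v w) x₁ x₂ y₁) y₂ y₃
          + (fun u v w => b u v w + lam • ω u v w) y₁
              ((fun u v w => b u v w + lam • ω u v w) x₁ x₂ y₂) y₃
          + (fun u v w => b u v w + lam • ω u v w) y₁ y₂
              ((fun u v w => b u v w + lam • ω u v w) x₁ x₂ y₃))
    ↔
    -- ... iff (i) ω satisfies the fundamental identity ...
    ((∀ x₁ x₂ y₁ y₂ y₃ : g,
        ω x₁ x₂ (ω y₁ y₂ y₃)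
          = ω (ω x₁ x₂ y₁) y₂ y₃ + ω y₁ (ω x₁ x₂ y₂) y₃ + ω y₁ y₂ (ω x₁ x₂ y₃))
     ∧
     -- ... and (ii) ω is a 1-cocycle in the adjoint representation.
     (∀ x₁ x₂ y₁ y₂ y₃ : g,
        ω x₁ x₂ (b y₁ y₂ y₃) + b x₁ x₂ (ω y₁ y₂ y₃)
          = ω (b x₁ x₂ y₁) y₂ y₃ + ω y₁ (b x₁ x₂ y₂) y₃ + ω y₁ y₂ (b x₁ x₂ y₃)
            + b (ω x₁ x₂ y₁) y₂ y₃ + b y₁ (ω x₁ x₂ y₂) y₃ + b y₁ y₂ (ω x₁ x₂ y₃))) := by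
  constructor
  · intro h
    constructor
    · intro x₁ x₂ y₁ y₂ y₃
      have e1 := h 1 x₁ x₂ y₁ y₂ y₃
      have e2 := h (-1) x₁ x₂ y₁ y₂ y₃
      have h0 := hfi x₁ x₂ y₁ y₂ y₃
      simp only [map_add, map_smul, LinearMap.add_apply, LinearMap.smul_apply,
        smul_add, smul_smul, one_smul, neg_smul, neg_neg, smul_neg, map_neg, LinearMap.neg_apply] at e1 e2
      have key : (2 : K) • (ω x₁ x₂ (ω y₁ y₂ y₃)
          - (ω (ω x₁ x₂ y₁) y₂ y₃ + ω y₁ (ω x₁ x₂ y₂) y₃ + ω y₁ y₂ (ω x₁ x₂ y₃))) = 0 := by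
        linear_combination (norm := module) e1 + e2 - (2 : K) • h0
      rcases smul_eq_zero.mp key with h' | h'
      · exact absurd h' hchar2
      · exact sub_eq_zero.mp h'
    · intro x₁ x₂ y₁ y₂ y₃
      have e1 := h 1 x₁ x₂ y₁ y₂ y₃
      have e2 := h (-1) x₁ x₂ y₁ y₂ y₃
      simp only [map_add, map_smul, LinearMap.add_apply, LinearMap.smul_apply,
        smul_add, smul_smul, one_smul, neg_smul, neg_neg, smul_neg, map_neg, LinearMap.neg_apply] at e1 e2
      have key : (2 : K) • (ω x₁ x₂ (b y₁ y₂ y₃) + b x₁ x₂ (ω y₁ y₂ y₃)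
          - (ω (b x₁ x₂ y₁) y₂ y₃ + ω y₁ (b x₁ x₂ y₂) y₃ + ω y₁ y₂ (b x₁ x₂ y₃)
            + b (ω x₁ x₂ y₁) y₂ y₃ + b y₁ (ω x₁ x₂ y₂) y₃ + b y₁ y₂ (ω x₁ x₂ y₃))) = 0 := by
        linear_combination (norm := module) e1 - e2
      rcases smul_eq_zero.mp key with h' | h'
      · exact absurd h' hchar2
      · exact sub_eq_zero.mp h'
  · rintro ⟨hQ, hC⟩ lam x₁ x₂ y₁ y₂ y₃
    have h0 := hfi x₁ x₂ y₁ y₂ y₃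
    have h1 := hC x₁ x₂ y₁ y₂ y₃
    have h2 := hQ x₁ x₂ y₁ y₂ y₃
    simp only [map_add, map_smul, LinearMap.add_apply, LinearMap.smul_apply,
      smul_add, smul_smul]
    linear_combination (norm := module) h0 + lam • h1 + (lam * lam) • h2
end

section
/- Let 0 → V → ĝ →ᵖ g → 0 be an abelian extension of 3-Lie algebras with section σ. Then ω(x₁,x₂,x₃) := [σ(x₁),σ(x₂),σ(x₃)]_ĝ − σ([x₁,x₂,x₃]_g) takes values in V and is a 1-cocycle of g with coefficients in V, where the representation is ρ(x₁,x₂)(u) = [σ(x₁),σ(x₂),u]_ĝ. -/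
/-- Lemma 5.4: given an abelian extension `0 → V → ĝ →ᵖ g → 0` of 3-Lie
algebras with section `σ`, the map `ω(x₁,x₂,x₃) = [σx₁,σx₂,σx₃]_ĝ − σ([x₁,x₂,x₃]_g)` takes
values in `V` and is a 1-cocycle of `g` with coefficients in `V`, for the representation
`ρ(x₁,x₂)(u) = [σx₁,σx₂,u]_ĝ`. -/
theorem threeLie_abelian_extension_cocycle
    {K : Type*} [Field K] {g gh V : Type*}
    [AddCommGroup g] [Module K g] [AddCommGroup gh] [Module K gh]
    [AddCommGroup V] [Module K V]
    (bg : g →ₗ[K] g →ₗ[K] g →ₗ[K] g)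
    (hbg1 : ∀ x y z, bg x y z = - bg y x z)
    (hbg2 : ∀ x y z, bg x y z = - bg x z y)
    (hbgfi : ∀ x₁ x₂ y₁ y₂ y₃, bg x₁ x₂ (bg y₁ y₂ y₃)
      = bg (bg x₁ x₂ y₁) y₂ y₃ + bg y₁ (bg x₁ x₂ y₂) y₃ + bg y₁ y₂ (bg x₁ x₂ y₃))
    (bh : gh →ₗ[K] gh →ₗ[K] gh →ₗ[K] gh)
    (hbh1 : ∀ x y z, bh x y z = - bh y x z)
    (hbh2 : ∀ x y z, bh x y z = - bh x z y)
    (hbhfi : ∀ x₁ x₂ y₁ y₂ y₃, bh x₁ x₂ (bh y₁ y₂ y₃)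
      = bh (bh x₁ x₂ y₁) y₂ y₃ + bh y₁ (bh x₁ x₂ y₂) y₃ + bh y₁ y₂ (bh x₁ x₂ y₃))
    (i : V →ₗ[K] gh) (p : gh →ₗ[K] g)
    (hi : Function.Injective i) (hp : Function.Surjective p)
    (hexact : LinearMap.range i = LinearMap.ker p)
    (hphom : ∀ x y z : gh, p (bh x y z) = bg (p x) (p y) (p z))
    (habelian : ∀ (w : gh) (u v : V), bh w (i u) (i v) = 0)
    (σ : g →ₗ[K] gh) (hσ : ∀ x, p (σ x) = x)
    -- the representation ρ(x₁,x₂)(u) = [σx₁,σx₂,u]_ĝ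
    (ρ : g →ₗ[K] g →ₗ[K] Module.End K V)
    (hρ : ∀ x₁ x₂ u, i (ρ x₁ x₂ u) = bh (σ x₁) (σ x₂) (i u)) :
    ∃ ω : g → g → g → V,
      -- ω takes values in V: `i ∘ ω` is the defect of σ
      (∀ x₁ x₂ x₃, i (ω x₁ x₂ x₃) = bh (σ x₁) (σ x₂) (σ x₃) - σ (bg x₁ x₂ x₃))
      -- and ω satisfies the 1-cocycle identity
      ∧ (∀ x₁ x₂ y₁ y₂ y₃,
          ω x₁ x₂ (bg y₁ y₂ y₃) + ρ x₁ x₂ (ω y₁ y₂ y₃)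
            = ω (bg x₁ x₂ y₁) y₂ y₃ + ω (bg x₁ x₂ y₂) y₃ y₁ + ω y₁ y₂ (bg x₁ x₂ y₃)
              + ρ y₂ y₃ (ω x₁ x₂ y₁) + ρ y₃ y₁ (ω x₁ x₂ y₂) + ρ y₁ y₂ (ω x₁ x₂ y₃)) := by

  have hmem : ∀ x₁ x₂ x₃ : g, ∃ v : V,
      i v = bh (σ x₁) (σ x₂) (σ x₃) - σ (bg x₁ x₂ x₃) := by
    intro x₁ x₂ x₃
    have h : bh (σ x₁) (σ x₂) (σ x₃) - σ (bg x₁ x₂ x₃) ∈ LinearMap.ker p := by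
      simp [LinearMap.mem_ker, hphom, hσ]
    rw [← hexact] at h
    exact h
  choose ω hω using hmem
  refine ⟨ω, hω, ?_⟩
  intro x₁ x₂ y₁ y₂ y₃
  apply hi
  have cyc : ∀ a b c : gh, bh a b c = bh b c a := fun a b c => by
    rw [hbh1 a b c, hbh2 b c a]
  have cycg : ∀ a b c : g, bg a b c = bg b c a := fun a b c => by
    rw [hbg1 a b c, hbg2 b c a]
  simp only [map_add, hρ, hω, map_sub]
  rw [cyc (σ (bg x₁ x₂ y₁)) (σ y₂) (σ y₃),
      cyc (σ (bg x₁ x₂ y₂)) (σ y₃) (σ y₁),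
      hbhfi (σ x₁) (σ x₂) (σ y₁) (σ y₂) (σ y₃),
      ← cyc (bh (σ x₁) (σ x₂) (σ y₁)) (σ y₂) (σ y₃),
      cyc (σ y₃) (σ y₁) (bh (σ x₁) (σ x₂) (σ y₂)),
      hbgfi x₁ x₂ y₁ y₂ y₃,
      ← cycg y₁ (bg x₁ x₂ y₂) y₃]
  simp only [map_add]
  abel
end
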